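/- arXiv:2103.12691 — 2 statements merged into one kernel-verified Lean document; each statement's English description precedes it below -/
import Mathlib

section
/- Let f ∈ R = D[t;σ] be monic irreducible of degree m > 1 with gcrd(f,t) = 1 and minimal central left multiple h(t) = ĥ(u⁻¹tⁿ). (i) For each z(t) = ẑ(u⁻¹tⁿ) ∈ F[u⁻¹tⁿ] with ẑ ∈ F[x], one has z ∈ Rf if and only if z ∈ Rh. (ii) The set E_f = {z(t) + Rf | z(t) = ẑ(u⁻¹tⁿ) ∈ F[u⁻¹tⁿ]}, with multiplication (x + Rf)∘(y + Rf) = xy + Rf for x, y ∈ F[u⁻¹tⁿ], is a field isomorphic to E_ĥ = F[x]/(ĥ(x)). -/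
namespace SkewPaper

/-- Data presenting a ring `R` as a skew polynomial ring `D[t;σ]` over a division ring `D`:
`ι` embeds `D`, `t` is the variable, `t * ι a = ι (σ a) * t`, and every element of `R`
is uniquely a finite sum `∑ ι (coeff f i) * t^i`. -/
structure SkewPolyData (D R : Type*) [DivisionRing D] [Ring R] where
  σ : D ≃+* D
  ι : D →+* R
  t : R
  coeff : R → ℕ → D
  twist : ∀ a : D, t * ι a = ι (σ a) * t
  support_finite : ∀ f : R, (Function.support (coeff f)).Finite
  coeff_ext : ∀ f g : R, (∀ i, coeff f i = coeff g i) → f = g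
  coeff_sum : ∀ (c : ℕ →₀ D) (i : ℕ),
    coeff (∑ j ∈ c.support, ι (c j) * t ^ j) i = c i

/-- Two elements are similar if the left modules `R/Rf` and `R/Rg` are isomorphic. -/
def Sim {R : Type*} [Ring R] (f g : R) : Prop :=
  Nonempty ((R ⧸ Submodule.span R {f}) ≃ₗ[R] (R ⧸ Submodule.span R {g}))

/-- `g` divides `f` on the right. -/
def RDvd {R : Type*} [Ring R] (g f : R) : Prop := ∃ q, f = q * g

/-- `g` divides `f` on the left. -/
def LDvd {R : Type*} [Ring R] (g f : R) : Prop := ∃ q, f = g * q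

/-- `Rf` is a two-sided ideal. -/
def RightInvariant {R : Type*} [Ring R] (f : R) : Prop := ∀ r : R, ∃ q, f * r = q * f

/-- `g` is a greatest common right divisor of `a` and `h`. -/
def IsGcrd {R : Type*} [Ring R] (a h g : R) : Prop :=
  RDvd g a ∧ RDvd g h ∧ ∀ g' : R, RDvd g' a → RDvd g' h → RDvd g' g

namespace SkewPolyData

variable {D R : Type*} [DivisionRing D] [Ring R] (S : SkewPolyData D R)

/-- The degree of a skew polynomial (`deg 0 = 0` by convention of `sSup ∅`). -/
noncomputable def deg (f : R) : ℕ := sSup {i | S.coeff f i ≠ 0}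

def Monic (f : R) : Prop := S.coeff f (S.deg f) = 1

/-- constant term -/
def const (f : R) : D := S.coeff f 0

/-- `f` is irreducible: it is not a unit and has no proper factorization. -/
def Irred (f : R) : Prop :=
  ¬ IsUnit f ∧ ¬ ∃ g p : R, 1 ≤ S.deg g ∧ S.deg g < S.deg f ∧
      1 ≤ S.deg p ∧ S.deg p < S.deg f ∧ f = g * p

/-- `f` has a proper factorization. -/
def Reducible (f : R) : Prop :=
  ∃ g p : R, 1 ≤ S.deg g ∧ S.deg g < S.deg f ∧
      1 ≤ S.deg p ∧ S.deg p < S.deg f ∧ f = g * p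

/-- `gcrd(f,t) = 1`: every common right divisor of `f` and `t` is a (degree-0) unit. -/
def CoprimeT (f : R) : Prop := ∀ g : R, RDvd g f → RDvd g S.t → S.deg g = 0

/-- `F = C ∩ Fix(σ)` as a subset of `D`. -/
def Fset : Set D := {a | a ∈ Subring.center D ∧ S.σ a = a}

/-- `σ` has order `n` modulo inner automorphisms, with `σ^n = i_u`, `u` fixed by `σ`. -/
def OrderModInner (n : ℕ) (u : D) : Prop :=
  0 < n ∧ u ≠ 0 ∧ S.σ u = u ∧ (∀ z : D, (⇑S.σ)^[n] z = u * z * u⁻¹) ∧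
  ∀ j : ℕ, 0 < j → j < n → ¬ ∃ w : D, w ≠ 0 ∧ ∀ z : D, (⇑S.σ)^[j] z = w * z * w⁻¹

/-- Evaluation of a commutative polynomial with coefficients in (the image of) `F`
at an element `x` of `R`. -/
noncomputable def evalAt {F : Type*} [Field F] (ιF : F →+* D) (p : Polynomial F) (x : R) : R :=
  p.sum fun i a => S.ι (ιF a) * x ^ i

/-- `h` is the minimal central left multiple of `f`, with `h = ĥ(u⁻¹ tⁿ)` for a monic `ĥ ∈ F[x]`. -/
def IsMclm (n : ℕ) (u : D) {F : Type*} [Field F] (ιF : F →+* D)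
    (f h : R) (hh : Polynomial F) : Prop :=
  h ∈ Subring.center R ∧ hh.Monic ∧
  h = S.evalAt ιF hh (S.ι u⁻¹ * S.t ^ n) ∧ (∃ g, h = g * f) ∧
  ∀ (h' : R) (hh' : Polynomial F), hh' ≠ 0 →
    h' = S.evalAt ιF hh' (S.ι u⁻¹ * S.t ^ n) → (∃ g, h' = g * f) → S.deg h ≤ S.deg h'

/-- `h` factors into `k` irreducible elements of `R`. -/
def FactorsIntoIrred (h : R) (k : ℕ) : Prop :=
  ∃ fs : Fin k → R, (∀ i, S.Irred (fs i)) ∧ h = (List.ofFn fs).prod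

/-- `modr g f` is the remainder of `g` under right division by `f`. -/
def IsModR (modr : R → R → R) : Prop :=
  ∀ g f : R, 1 ≤ S.deg f →
    (∃ q, g = q * f + modr g f) ∧ (modr g f = 0 ∨ S.deg (modr g f) < S.deg f)

/-- The set `A = { d₀ + d₁ t + ⋯ + d_{lm-1} t^{lm-1} + ν ρ(d₀) t^{lm} }`. -/
def ASet (ν : D) (ρ : D ≃+* D) (lm : ℕ) : Set R :=
  {x | ∃ b : R, S.deg b < lm ∧ x = b + S.ι (ν * ρ (S.const b)) * S.t ^ lm}

/-- The twisted multiplication `b ∘ c = (b + ν ρ(b₀) t^{lm}) c  mod_r f`. -/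
def circ (modr : R → R → R) (f : R) (ν : D) (ρ : D ≃+* D) (lm : ℕ) (b c : R) : R :=
  modr ((b + S.ι (ν * ρ (S.const b)) * S.t ^ lm) * c) f

/-- All coefficients of `p` lie in the subfield (image of) `E`. -/
def CoeffsIn {E : Type*} [Field E] (ιE : E →+* D) (p : R) : Prop := ∀ i, ∃ e, ιE e = S.coeff p i

end SkewPolyData

/-- `D` has dimension `d2` over its center. -/
def CentralDim (D : Type*) [DivisionRing D] (d2 : ℕ) : Prop :=
  ∃ bas : Fin d2 → D,
    (∀ x : D, ∃ c : Fin d2 → D, (∀ i, c i ∈ Subring.center D) ∧ x = ∑ i, c i * bas i) ∧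
    (∀ c : Fin d2 → D, (∀ i, c i ∈ Subring.center D) → ∑ i, c i * bas i = 0 → ∀ i, c i = 0)

/-- `Fb` is finite-dimensional as a vector space over the subfield `F'` of `D`. -/
def FinDimOver {D : Type*} [DivisionRing D] (F' Fb : Set D) : Prop :=
  ∃ T : Finset D, ↑T ⊆ Fb ∧ ∀ a ∈ Fb, ∃ c : D → D, (∀ x ∈ T, c x ∈ F') ∧ a = ∑ x ∈ T, c x * x

/-- The column rank of a matrix over a division ring: the rank of the right `B`-module
generated by its columns. -/
noncomputable def colrank {k : ℕ} {B : Type*} [DivisionRing B]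
    (M : Matrix (Fin k) (Fin k) B) : ℕ :=
  Module.finrank Bᵐᵒᵖ (Submodule.span Bᵐᵒᵖ (Set.range fun j : Fin k => fun i : Fin k => M i j))

/-- `D` is presented as the cyclic algebra `(E/C, γ, aC)` of degree `d`, with maximal
subfield `E` embedded by `ιE`, `Gal(E/C) = ⟨γ⟩` and a generator `e` with `e^d = aC`. -/
def IsCyclicPresentation {D : Type*} [DivisionRing D] {C E : Type*} [Field C] [Field E]
    [Algebra C E] (ιE : E →+* D) (γ : E ≃ₐ[C] E) (d : ℕ) (e : D) (aC : C) : Prop :=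
  (∀ a : D, a ∈ Subring.center D ↔ ∃ c : C, ιE (algebraMap C E c) = a) ∧
  Module.finrank C E = d ∧
  (∀ τ : E ≃ₐ[C] E, τ ∈ Subgroup.zpowers γ) ∧
  (∀ z : E, e * ιE z = ιE (γ z) * e) ∧
  e ^ d = ιE (algebraMap C E aC) ∧
  (∀ x : D, ∃ c : Fin d → E, x = ∑ i, ιE (c i) * e ^ (i : ℕ))

/-- Multiplication of matrices with entries representing elements of `B = Nuc_r(S_f)`,
where entries multiply via `a ∘ b = ab mod_r f`. -/
def matmulB {R : Type*} [Ring R] (modr : R → R → R) (f : R) {k : ℕ}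
    (M N : Fin k → Fin k → R) : Fin k → Fin k → R :=
  fun i j => ∑ l, modr (M i l * N l j) f

end SkewPaper

/-!
Evaluation at the central element `x = u⁻¹tⁿ` is a ring map `φ : F[x] → Z(R)`. Right division
by any nonzero element makes `R` a left principal ideal ring, so for irreducible `f` the left
ideal `Rf` is maximal. Pulling a maximal left ideal back along a map with central image gives a
prime ideal, so `I = φ⁻¹(Rf)` is a nonzero prime of `F[x]`, hence maximal. Since
`deg φ(p) = n · deg p`, the minimality of `h` says `ĥ` has least degree in `I`, so `I = (ĥ)`:
this gives (i) and the kernel, and maximality of `I` gives the inverses in `E_f`.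
-/

theorem Ideal.IsMaximal.comap_isPrime_of_forall_mem_center {K A : Type*} [CommRing K] [Ring A]
    (φ : K →+* A) (hφ : ∀ k, φ k ∈ Subring.center A) {L : Ideal A} (hL : L.IsMaximal) :
    (L.comap φ).IsPrime := by
  refine ⟨Ideal.comap_ne_top φ hL.ne_top,
    fun {a b} hab => or_iff_not_imp_right.2 fun hb => ?_⟩
  obtain ⟨y, i, hi, hyi⟩ := hL.exists_inv hb
  rw [Ideal.mem_comap] at hab ⊢
  have hφa : φ a = y * φ (a * b) + φ a * i := by
    rw [map_mul, ← mul_assoc, Subring.mem_center_iff.1 (hφ a) y, mul_assoc, ← mul_add, hyi,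
      mul_one]
  rw [hφa]
  exact L.add_mem (L.mul_mem_left y hab) (L.mul_mem_left (φ a) hi)

theorem Polynomial.dvd_of_mem_of_forall_natDegree_le {F : Type*} [Field F]
    {I : Ideal (Polynomial F)} {g : Polynomial F} (hgI : g ∈ I) (hg : g ≠ 0)
    (hmin : ∀ p ∈ I, p ≠ 0 → g.natDegree ≤ p.natDegree) {p : Polynomial F} (hp : p ∈ I) :
    g ∣ p := by
  have hmod : p % g ∈ I := by
    rw [EuclideanDomain.mod_eq_sub_mul_div]
    exact I.sub_mem hp (I.mul_mem_right _ hgI)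
  refine EuclideanDomain.mod_eq_zero.1 (by_contra fun hr => ?_)
  exact (Polynomial.natDegree_lt_natDegree hr (Polynomial.degree_mod_lt p hg)).not_ge
    (hmin _ hmod hr)

namespace SkewPaper.SkewPolyData

variable {D R : Type*} [DivisionRing D] [Ring R] (S : SkewPolyData D R)

noncomputable def sumMonomials : (ℕ →₀ D) →+ R :=
  Finsupp.liftAddHom fun j => (AddMonoidHom.mulRight (S.t ^ j)).comp S.ι.toAddMonoidHom

lemma sumMonomials_apply (c : ℕ →₀ D) :
    S.sumMonomials c = ∑ j ∈ c.support, S.ι (c j) * S.t ^ j := by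
  simp [sumMonomials, Finsupp.sum]

lemma sumMonomials_single (k : ℕ) (a : D) :
    S.sumMonomials (Finsupp.single k a) = S.ι a * S.t ^ k := by
  simp [sumMonomials]

lemma coeff_sumMonomials (c : ℕ →₀ D) (i : ℕ) : S.coeff (S.sumMonomials c) i = c i := by
  rw [sumMonomials_apply, S.coeff_sum]

noncomputable def coeffs (f : R) : ℕ →₀ D :=
  Finsupp.ofSupportFinite (S.coeff f) (S.support_finite f)

lemma sumMonomials_coeffs (f : R) : S.sumMonomials (S.coeffs f) = f :=
  S.coeff_ext _ _ fun i => by rw [coeff_sumMonomials]; rfl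

/-- Bundling the coefficients as an additive equivalence makes `coeff` additive for free. -/
noncomputable def coeffEquiv : R ≃+ (ℕ →₀ D) :=
  AddEquiv.symm
    { S.sumMonomials with
      invFun := S.coeffs
      left_inv := fun c => Finsupp.ext (S.coeff_sumMonomials c)
      right_inv := S.sumMonomials_coeffs }

lemma coeff_eq_coeffEquiv (f : R) (i : ℕ) : S.coeff f i = S.coeffEquiv f i := rfl

@[simp] lemma coeff_zero (i : ℕ) : S.coeff 0 i = 0 := by
  simp [coeff_eq_coeffEquiv]

lemma coeff_sub (f g : R) (i : ℕ) : S.coeff (f - g) i = S.coeff f i - S.coeff g i := by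
  simp [coeff_eq_coeffEquiv]

lemma coeff_finset_sum {α : Type*} (s : Finset α) (f : α → R) (i : ℕ) :
    S.coeff (∑ a ∈ s, f a) i = ∑ a ∈ s, S.coeff (f a) i := by
  simp [coeff_eq_coeffEquiv]

lemma coeff_ι_mul_t_pow (a : D) (k i : ℕ) :
    S.coeff (S.ι a * S.t ^ k) i = if k = i then a else 0 := by
  rw [← sumMonomials_single, coeff_sumMonomials, Finsupp.single_apply]

lemma eq_sum_coeffs (f : R) : f = ∑ j ∈ (S.coeffs f).support, S.ι (S.coeff f j) * S.t ^ j := by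
  conv_lhs => rw [← S.sumMonomials_coeffs f, sumMonomials_apply]
  rfl

lemma t_pow_mul_ι (k : ℕ) (a : D) : S.t ^ k * S.ι a = S.ι ((⇑S.σ)^[k] a) * S.t ^ k := by
  induction k with
  | zero => simp
  | succ k ih =>
    rw [pow_succ', mul_assoc, ih, ← mul_assoc, S.twist, mul_assoc, ← pow_succ',
      Function.iterate_succ_apply']

lemma coeff_ι_mul_t_pow_mul (a : D) (k : ℕ) (g : R) (i : ℕ) :
    S.coeff (S.ι a * S.t ^ k * g) i =
      if k ≤ i then a * (⇑S.σ)^[k] (S.coeff g (i - k)) else 0 := by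
  have hexp : S.ι a * S.t ^ k * g = ∑ j ∈ (S.coeffs g).support,
      S.ι (a * (⇑S.σ)^[k] (S.coeff g j)) * S.t ^ (k + j) := by
    conv_lhs => rw [S.eq_sum_coeffs g]
    rw [Finset.mul_sum]
    refine Finset.sum_congr rfl fun j _ => ?_
    rw [mul_assoc, ← mul_assoc (S.t ^ k), t_pow_mul_ι, map_mul, pow_add]
    simp only [mul_assoc]
  simp only [hexp, coeff_finset_sum, coeff_ι_mul_t_pow]
  split_ifs with hk
  · rw [Finset.sum_eq_single (i - k)]
    · rw [if_pos (by omega)]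
    · exact fun j _ hj => if_neg (by omega)
    · intro hnot
      rw [if_pos (by omega), show S.coeff g (i - k) = 0 from Finsupp.notMem_support_iff.1 hnot,
        iterate_map_zero, mul_zero]
  · exact Finset.sum_eq_zero fun j _ => if_neg (by omega)

lemma coeff_mul (f g : R) (j : ℕ) :
    S.coeff (f * g) j = ∑ i ∈ (S.coeffs f).support,
      if i ≤ j then S.coeff f i * (⇑S.σ)^[i] (S.coeff g (j - i)) else 0 := by
  conv_lhs => rw [S.eq_sum_coeffs f, Finset.sum_mul, coeff_finset_sum]
  simp only [coeff_ι_mul_t_pow_mul]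

lemma mem_support_coeffs {f : R} {i : ℕ} : i ∈ (S.coeffs f).support ↔ S.coeff f i ≠ 0 :=
  Finsupp.mem_support_iff

lemma le_deg_of_coeff_ne_zero {f : R} {i : ℕ} (h : S.coeff f i ≠ 0) : i ≤ S.deg f :=
  le_csSup (S.support_finite f).bddAbove h

lemma coeff_eq_zero_of_deg_lt {f : R} {i : ℕ} (h : S.deg f < i) : S.coeff f i = 0 := by
  by_contra hne
  exact absurd (S.le_deg_of_coeff_ne_zero hne) (by omega)

lemma coeff_deg_ne_zero {f : R} (hf : f ≠ 0) : S.coeff f (S.deg f) ≠ 0 := by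
  obtain ⟨i, hi⟩ : ∃ i, S.coeff f i ≠ 0 := by
    by_contra! h
    exact hf (S.coeff_ext f 0 fun i => by rw [h i, coeff_zero])
  exact Nat.sSup_mem ⟨i, hi⟩ (S.support_finite f).bddAbove

lemma deg_le_of_forall_coeff_eq_zero {f : R} {N : ℕ} (h : ∀ i, N < i → S.coeff f i = 0) :
    S.deg f ≤ N := by
  by_cases hf : f = 0
  · subst hf
    simp [deg]
  · by_contra! hlt
    exact S.coeff_deg_ne_zero hf (h _ hlt)

lemma deg_lt_of_forall_coeff_eq_zero {f : R} (hf : f ≠ 0) {N : ℕ}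
    (h : ∀ i, N ≤ i → S.coeff f i = 0) : S.deg f < N := by
  by_contra! hle
  exact S.coeff_deg_ne_zero hf (h _ hle)

lemma ne_zero_of_deg_pos {f : R} (hf : 0 < S.deg f) : f ≠ 0 := by
  rintro rfl
  simp [deg] at hf

lemma coeff_mul_deg_add_deg {f g : R} (hf : f ≠ 0) :
    S.coeff (f * g) (S.deg f + S.deg g) =
      S.coeff f (S.deg f) * (⇑S.σ)^[S.deg f] (S.coeff g (S.deg g)) := by
  rw [coeff_mul, Finset.sum_eq_single (S.deg f)]
  · rw [if_pos (by omega), Nat.add_sub_cancel_left]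
  · intro i hi hne
    have hle := S.le_deg_of_coeff_ne_zero (S.mem_support_coeffs.1 hi)
    split_ifs
    · rw [S.coeff_eq_zero_of_deg_lt (f := g) (by omega), iterate_map_zero, mul_zero]
    · rfl
  · exact fun hnot => absurd (S.mem_support_coeffs.2 (S.coeff_deg_ne_zero hf)) hnot

lemma iterate_σ_ne_zero (k : ℕ) {a : D} (ha : a ≠ 0) : (⇑S.σ)^[k] a ≠ 0 :=
  fun h0 => ha (S.σ.injective.iterate k (by rw [h0, iterate_map_zero]))

lemma deg_mul {f g : R} (hf : f ≠ 0) (hg : g ≠ 0) : S.deg (f * g) = S.deg f + S.deg g := by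
  refine le_antisymm (S.deg_le_of_forall_coeff_eq_zero fun j hj => ?_)
    (S.le_deg_of_coeff_ne_zero ?_)
  · rw [coeff_mul]
    refine Finset.sum_eq_zero fun i hi => ?_
    have hle := S.le_deg_of_coeff_ne_zero (S.mem_support_coeffs.1 hi)
    split_ifs
    · rw [S.coeff_eq_zero_of_deg_lt (f := g) (by omega), iterate_map_zero, mul_zero]
    · rfl
  · rw [S.coeff_mul_deg_add_deg hf]
    exact mul_ne_zero (S.coeff_deg_ne_zero hf) (S.iterate_σ_ne_zero _ (S.coeff_deg_ne_zero hg))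

lemma isUnit_of_deg_eq_zero {f : R} (hf : f ≠ 0) (h : S.deg f = 0) : IsUnit f := by
  have hconst : f = S.ι (S.coeff f 0) * S.t ^ 0 := S.coeff_ext _ _ fun i => by
    rw [coeff_ι_mul_t_pow]
    split_ifs with hi
    · rw [hi]
    · exact S.coeff_eq_zero_of_deg_lt (by omega)
  rw [hconst, pow_zero, mul_one]
  exact ((isUnit_iff_ne_zero.2 (h ▸ S.coeff_deg_ne_zero hf))).map S.ι

/-- `g` need not be monic: its leading coefficient is invertible in the division ring `D`. -/
lemma exists_eq_mul_add {g : R} (hg : g ≠ 0) (a : R) :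
    ∃ q r, a = q * g + r ∧ (r = 0 ∨ S.deg r < S.deg g) := by
  induction hN : S.deg a using Nat.strong_induction_on generalizing a with
  | _ N ih =>
  by_cases hlt : a = 0 ∨ S.deg a < S.deg g
  · exact ⟨0, a, by rw [zero_mul, zero_add], hlt⟩
  rw [not_or, not_lt] at hlt
  obtain ⟨ha, hle⟩ := hlt
  set k := S.deg a - S.deg g
  set c := S.coeff a (S.deg a) * ((⇑S.σ)^[k] (S.coeff g (S.deg g)))⁻¹
  set a' := a - S.ι c * S.t ^ k * g
  have hσg := S.iterate_σ_ne_zero k (S.coeff_deg_ne_zero hg)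
  have hvan : ∀ i, S.deg a ≤ i → S.coeff a' i = 0 := by
    intro i hi
    rw [coeff_sub, coeff_ι_mul_t_pow_mul, if_pos (by omega)]
    rcases hi.eq_or_lt with rfl | hi
    · rw [show S.deg a - k = S.deg g by omega, inv_mul_cancel_right₀ hσg, sub_self]
    · rw [S.coeff_eq_zero_of_deg_lt hi, S.coeff_eq_zero_of_deg_lt (f := g) (by omega),
        iterate_map_zero, mul_zero, sub_self]
  have hsplit : a = S.ι c * S.t ^ k * g + a' := (add_sub_cancel _ _).symm
  by_cases ha' : a' = 0
  · exact ⟨S.ι c * S.t ^ k, 0, by rw [hsplit, ha'], Or.inl rfl⟩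
  · obtain ⟨q, r, hqr, hr⟩ :=
      ih _ (hN ▸ S.deg_lt_of_forall_coeff_eq_zero ha' hvan) a' rfl
    exact ⟨S.ι c * S.t ^ k + q, r, by rw [hsplit, hqr, add_mul, add_assoc], hr⟩

lemma deg_one : S.deg (1 : R) = 0 := by
  refine Nat.le_zero.1 (S.deg_le_of_forall_coeff_eq_zero fun i hi => ?_)
  have h := S.coeff_ι_mul_t_pow 1 0 i
  rwa [map_one, pow_zero, mul_one, if_neg (by omega)] at h

theorem isPrincipalIdealRing (S : SkewPolyData D R) : IsPrincipalIdealRing R where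
  principal J := by
    classical
    by_cases hJ : ∃ g ∈ J, g ≠ 0
    · have hex : ∃ d, ∃ g ∈ J, g ≠ 0 ∧ S.deg g = d := by
        obtain ⟨g, hgJ, hg⟩ := hJ
        exact ⟨_, g, hgJ, hg, rfl⟩
      obtain ⟨g, hgJ, hg, hgd⟩ := Nat.find_spec hex
      refine ⟨g, le_antisymm (fun a ha => ?_) ((Ideal.span_singleton_le_iff_mem J).2 hgJ)⟩
      obtain ⟨q, r, rfl, hr⟩ := S.exists_eq_mul_add hg a
      have hrJ : r ∈ J := by simpa using J.sub_mem ha (J.mul_mem_left q hgJ)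
      obtain rfl : r = 0 := by
        by_contra hr0
        have := Nat.find_min' hex ⟨r, hrJ, hr0, rfl⟩
        have := hr.resolve_left hr0
        omega
      exact Ideal.mem_span_singleton'.2 ⟨q, (add_zero _).symm⟩
    · push Not at hJ
      exact ⟨0, le_antisymm (fun a ha => by simp [hJ a ha])
        ((Ideal.span_singleton_le_iff_mem J).2 J.zero_mem)⟩

theorem isMaximal_span_singleton {f : R} (hirr : S.Irred f) (hf : 0 < S.deg f) :
    (Ideal.span {f}).IsMaximal := by
  have hf0 := S.ne_zero_of_deg_pos hf
  refine Ideal.isMaximal_def.2 ⟨fun htop => ?_, fun J hJ => ?_⟩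
  · obtain ⟨q, hq⟩ := Ideal.mem_span_singleton'.1 ((Ideal.eq_top_iff_one _).1 htop)
    have hq0 : q ≠ 0 := by
      rintro rfl
      exact hf0 (by rw [← mul_one f, ← hq, zero_mul, mul_zero])
    have hdeg := S.deg_mul hq0 hf0
    rw [hq, deg_one] at hdeg
    omega
  · obtain ⟨g, rfl⟩ := (S.isPrincipalIdealRing.principal J).principal
    obtain ⟨q, hq⟩ := Ideal.mem_span_singleton'.1 (hJ.le (Ideal.mem_span_singleton_self f))
    have hq0 : q ≠ 0 := by rintro rfl; exact hf0 (by simp [← hq])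
    have hg0 : g ≠ 0 := by rintro rfl; exact hf0 (by simp [← hq])
    have hdeg := S.deg_mul hq0 hg0
    rw [hq] at hdeg
    by_cases hg : S.deg g = 0
    · exact Ideal.eq_top_of_isUnit_mem _ (Ideal.mem_span_singleton_self g)
        (S.isUnit_of_deg_eq_zero hg0 hg)
    by_cases hqd : S.deg q = 0
    · obtain ⟨v, rfl⟩ := S.isUnit_of_deg_eq_zero hq0 hqd
      refine absurd ((Ideal.span_singleton_le_iff_mem _).2 ?_) hJ.not_ge
      exact Ideal.mem_span_singleton'.2
        ⟨↑v⁻¹, by rw [← hq, ← mul_assoc, Units.inv_mul, one_mul]⟩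
    exact absurd ⟨q, g, by omega, by omega, by omega, by omega, hq.symm⟩ hirr.2

lemma mem_center_of_commute {w : R} (hι : ∀ a : D, w * S.ι a = S.ι a * w)
    (ht : w * S.t = S.t * w) : w ∈ Subring.center R := by
  refine Subring.mem_center_iff.2 fun g => ?_
  rw [S.eq_sum_coeffs g, Finset.sum_mul, Finset.mul_sum]
  refine Finset.sum_congr rfl fun j _ => ?_
  rw [mul_assoc, ← (Commute.pow_right ht j).eq, ← mul_assoc, ← hι, mul_assoc]

lemma ι_mem_center {a : D} (ha : a ∈ S.Fset) : S.ι a ∈ Subring.center R :=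
  S.mem_center_of_commute
    (fun b => by rw [← map_mul, ← map_mul, Subring.mem_center_iff.1 ha.1 b])
    (by rw [S.twist, ha.2])

lemma σ_inv_of_fixed {u : D} (hσu : S.σ u = u) : S.σ u⁻¹ = u⁻¹ := by
  rw [map_inv₀, hσu]

/-- `u⁻¹ tⁿ` is central: conjugation by `u` undoes `σⁿ`, and `u` is `σ`-fixed. -/
lemma ι_inv_mul_t_pow_mem_center {n : ℕ} {u : D} (hu : u ≠ 0) (hσu : S.σ u = u)
    (hinner : ∀ z : D, (⇑S.σ)^[n] z = u * z * u⁻¹) :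
    S.ι u⁻¹ * S.t ^ n ∈ Subring.center R := by
  refine S.mem_center_of_commute (fun a => ?_) ?_
  · rw [mul_assoc, t_pow_mul_ι, hinner, ← mul_assoc, ← map_mul, ← mul_assoc, ← mul_assoc,
      inv_mul_cancel₀ hu, one_mul, map_mul, mul_assoc]
  · rw [← mul_assoc S.t, S.twist, S.σ_inv_of_fixed hσu, mul_assoc, mul_assoc, ← pow_succ,
      ← pow_succ']

lemma ι_inv_mul_t_pow_pow {n : ℕ} {u : D} (hσu : S.σ u = u) (i : ℕ) :
    (S.ι u⁻¹ * S.t ^ n) ^ i = S.ι (u⁻¹ ^ i) * S.t ^ (n * i) := by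
  induction i with
  | zero => simp
  | succ i ih =>
    rw [pow_succ, ih, mul_assoc, ← mul_assoc (S.t ^ (n * i)), t_pow_mul_ι,
      Function.iterate_fixed (S.σ_inv_of_fixed hσu), ← mul_assoc, ← mul_assoc, ← map_mul,
      ← pow_succ, mul_assoc, ← pow_add, Nat.mul_succ]

section evalAt

variable {F : Type*} [Field F] (ιF : F →+* D)

noncomputable def evalRingHom {x : R} (hx : x ∈ Subring.center R) : Polynomial F →+* R :=
  Polynomial.eval₂RingHom' (S.ι.comp ιF) x fun _ => Subring.mem_center_iff.1 hx _

lemma evalRingHom_apply {x : R} (hx : x ∈ Subring.center R) (p : Polynomial F) :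
    S.evalRingHom ιF hx p = S.evalAt ιF p x :=
  Polynomial.eval₂_eq_sum

lemma evalAt_mem_center (hF : ∀ c, S.ι (ιF c) ∈ Subring.center R) {x : R}
    (hx : x ∈ Subring.center R) (p : Polynomial F) : S.evalAt ιF p x ∈ Subring.center R :=
  Subring.sum_mem _ fun i _ => Subring.mul_mem _ (hF _) (Subring.pow_mem _ hx i)

lemma coeff_evalAt_ι_inv_mul_t_pow {n : ℕ} {u : D} (hσu : S.σ u = u) (p : Polynomial F)
    (j : ℕ) :
    S.coeff (S.evalAt ιF p (S.ι u⁻¹ * S.t ^ n)) j =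
      ∑ i ∈ p.support, if n * i = j then ιF (p.coeff i) * u⁻¹ ^ i else 0 := by
  rw [evalAt, Polynomial.sum_def, coeff_finset_sum]
  refine Finset.sum_congr rfl fun i _ => ?_
  rw [S.ι_inv_mul_t_pow_pow hσu, ← mul_assoc, ← map_mul, coeff_ι_mul_t_pow]

lemma deg_evalAt_ι_inv_mul_t_pow {n : ℕ} (hn : 0 < n) {u : D} (hu : u ≠ 0) (hσu : S.σ u = u)
    {p : Polynomial F} (hp : p ≠ 0) :
    S.deg (S.evalAt ιF p (S.ι u⁻¹ * S.t ^ n)) = n * p.natDegree := by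
  refine le_antisymm (S.deg_le_of_forall_coeff_eq_zero fun j hj => ?_)
    (S.le_deg_of_coeff_ne_zero ?_)
  · rw [S.coeff_evalAt_ι_inv_mul_t_pow ιF hσu]
    refine Finset.sum_eq_zero fun i hi => if_neg ?_
    have := Nat.mul_le_mul_left n (Polynomial.le_natDegree_of_mem_supp i hi)
    omega
  · rw [S.coeff_evalAt_ι_inv_mul_t_pow ιF hσu, Finset.sum_eq_single p.natDegree, if_pos rfl]
    · exact mul_ne_zero ((map_ne_zero ιF).2 (Polynomial.leadingCoeff_ne_zero.2 hp))
        (pow_ne_zero _ (inv_ne_zero hu))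
    · exact fun i _ hi => if_neg fun h => hi (Nat.eq_of_mul_eq_mul_left hn h)
    · exact fun hnot => absurd (Polynomial.natDegree_mem_support_of_nonzero hp) hnot

end evalAt

end SkewPaper.SkewPolyData

open SkewPaper

theorem Ef_is_field_isomorphic_to_Ehhat_general
    {D Rg : Type*} [DivisionRing D] [Ring Rg] (S : SkewPolyData D Rg)
    (n : ℕ) (u : D) (hord : S.OrderModInner n u)
    {F : Type*} [Field F] (ιF : F →+* D)
    (hFrange : ∀ a : D, a ∈ S.Fset ↔ ∃ c : F, ιF c = a)
    (f : Rg) (m : ℕ) (hm : 1 < m) (hdegf : S.deg f = m)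
    (hirr : S.Irred f)
    (h : Rg) (hh : Polynomial F) (hmclm : S.IsMclm n u ιF f h hh) :
    (∀ p : Polynomial F,
      (∃ q, S.evalAt ιF p (S.ι u⁻¹ * S.t ^ n) = q * f) ↔
      (∃ q, S.evalAt ιF p (S.ι u⁻¹ * S.t ^ n) = q * h)) ∧
    (∀ p : Polynomial F, (∃ q, S.evalAt ιF p (S.ι u⁻¹ * S.t ^ n) = q * f) ↔ hh ∣ p) ∧
    (∀ p : Polynomial F, ¬ hh ∣ p →
      ∃ (q : Polynomial F) (w : Rg),
        S.evalAt ιF (p * q) (S.ι u⁻¹ * S.t ^ n) = 1 + w * f) := by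
  obtain ⟨hn, hu, hσu, hinner, -⟩ := hord
  obtain ⟨-, hhmonic, rfl, ⟨g, hgf⟩, hmin⟩ := hmclm
  set x := S.ι u⁻¹ * S.t ^ n
  have hx : x ∈ Subring.center Rg := S.ι_inv_mul_t_pow_mem_center hu hσu hinner
  let φ := S.evalRingHom ιF hx
  have hφ (p : Polynomial F) : φ p = S.evalAt ιF p x := S.evalRingHom_apply ιF hx p
  have hφ_center (p : Polynomial F) : φ p ∈ Subring.center Rg :=
    hφ p ▸ S.evalAt_mem_center ιF (fun c => S.ι_mem_center ((hFrange _).2 ⟨c, rfl⟩)) hx p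
  let I := (Ideal.span {f}).comap φ
  have hmemI (p : Polynomial F) : p ∈ I ↔ ∃ q, S.evalAt ιF p x = q * f := by
    simp only [I, Ideal.mem_comap, Ideal.mem_span_singleton', hφ, eq_comm]
  have hhI : hh ∈ I := (hmemI hh).2 ⟨g, hgf⟩
  have hdvd (p : Polynomial F) : p ∈ I ↔ hh ∣ p := by
    refine ⟨Polynomial.dvd_of_mem_of_forall_natDegree_le hhI hhmonic.ne_zero fun p hp hp0 => ?_,
      fun hd => I.mem_of_dvd hd hhI⟩
    have hle := hmin _ p hp0 rfl ((hmemI p).1 hp)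
    rw [S.deg_evalAt_ι_inv_mul_t_pow ιF hn hu hσu hhmonic.ne_zero,
      S.deg_evalAt_ι_inv_mul_t_pow ιF hn hu hσu hp0] at hle
    exact Nat.le_of_mul_le_mul_left hle hn
  have hImax : I.IsMaximal :=
    ((S.isMaximal_span_singleton hirr (by omega)).comap_isPrime_of_forall_mem_center φ
      hφ_center).isMaximal fun hbot => hhmonic.ne_zero (Ideal.mem_bot.1 (hbot ▸ hhI))
  refine ⟨fun p => ⟨fun hp => ?_, fun ⟨q, hq⟩ => ⟨q * g, by rw [hq, hgf, mul_assoc]⟩⟩,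
    fun p => (hmemI p).symm.trans (hdvd p), fun p hp => ?_⟩
  · obtain ⟨s, rfl⟩ := (hdvd p).1 ((hmemI p).2 hp)
    exact ⟨φ s, by rw [← hφ, ← hφ, map_mul, Subring.mem_center_iff.1 (hφ_center hh)]⟩
  · obtain ⟨q, i, hi, hqi⟩ := hImax.exists_inv (mt (hdvd p).1 hp)
    obtain ⟨w, hw⟩ := (hmemI i).1 hi
    refine ⟨q, -w, ?_⟩
    rw [← hφ, mul_comm, eq_sub_of_add_eq hqi, map_sub, map_one, hφ, hw, neg_mul,
      sub_eq_add_neg]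

/-- Let `f ∈ R = D[t;σ]` be monic irreducible of degree `m > 1` with
`gcrd(f,t) = 1` and minimal central left multiple `h(t) = ĥ(u⁻¹tⁿ)`.
(i) For each `z(t) = ẑ(u⁻¹tⁿ) ∈ F[u⁻¹tⁿ]` with `ẑ ∈ F[x]`, one has `z ∈ Rf ↔ z ∈ Rh`.
(ii) The set `E_f = {z(t) + Rf | z(t) = ẑ(u⁻¹tⁿ)}`, with multiplication
`(x + Rf)∘(y + Rf) = xy + Rf`, is a field isomorphic to `E_ĥ = F[x]/(ĥ(x))`: the ring
homomorphism `F[x] → E_f`, `p ↦ p(u⁻¹tⁿ) + Rf` has kernel exactly `(ĥ)`, and every element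
of `E_f` not in the kernel is invertible modulo `Rf` within `E_f`. -/
theorem Ef_is_field_isomorphic_to_Ehhat
    {D Rg : Type*} [DivisionRing D] [Ring Rg] (S : SkewPolyData D Rg)
    (n : ℕ) (u : D) (hord : S.OrderModInner n u)
    {F : Type*} [Field F] (ιF : F →+* D)
    (hFrange : ∀ a : D, a ∈ S.Fset ↔ ∃ c : F, ιF c = a)
    (f : Rg) (m : ℕ) (hm : 1 < m) (hdegf : S.deg f = m) (hmonic : S.Monic f)
    (hirr : S.Irred f) (hcop : S.CoprimeT f)
    (h : Rg) (hh : Polynomial F) (hmclm : S.IsMclm n u ιF f h hh) :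
    (∀ p : Polynomial F,
      (∃ q, S.evalAt ιF p (S.ι u⁻¹ * S.t ^ n) = q * f) ↔
      (∃ q, S.evalAt ιF p (S.ι u⁻¹ * S.t ^ n) = q * h)) ∧
    (∀ p : Polynomial F, (∃ q, S.evalAt ιF p (S.ι u⁻¹ * S.t ^ n) = q * f) ↔ hh ∣ p) ∧
    (∀ p : Polynomial F, ¬ hh ∣ p →
      ∃ (q : Polynomial F) (w : Rg),
        S.evalAt ιF (p * q) (S.ι u⁻¹ * S.t ^ n) = 1 + w * f) :=
  Ef_is_field_isomorphic_to_Ehhat_general S n u hord ιF hFrange f m hm hdegf hirr h hh hmclm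
end

section
/- Let f ∈ R = D[t;σ] be monic irreducible of degree m > 1 with gcrd(f,t) = 1, let ν ∈ D, ρ ∈ Aut(D), F' = Fix(ρ) ∩ F with F/F' finite-dimensional, and let (R_m,∘) be the F'-algebra of skew polynomials of degree < m with multiplication b∘c = (b(t) + νρ(b₀)t^m)·c(t) mod_r f. Set A = {d₀ + d₁t + ⋯ + d_{m−1}t^{m−1} + νρ(d₀)t^m | d_i ∈ D}. Then: (i) if a ∈ A is reducible, then a is not a left zero divisor of (R_m,∘); (ii) if ν = 0, then (R_m,∘) is a division algebra over F' (for m ≥ 2 it is a Petit algebra); (iii) if A contains no polynomial similar to f, then (R_m,∘) is a division algebra over F'. -/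
open SkewPaper

section Helpers
variable {D R : Type*} [DivisionRing D] [Ring R] (S : SkewPolyData D R)

/-- the coefficient finsupp of an element -/
noncomputable def tofs (x : R) : ℕ →₀ D :=
  ⟨(S.support_finite x).toFinset, S.coeff x, by
    intro a; simp [Set.Finite.mem_toFinset, Function.mem_support]⟩

@[simp] lemma tofs_apply (x : R) (i : ℕ) : tofs S x i = S.coeff x i := rfl

lemma sp_repr (x : R) : x = ∑ j ∈ (tofs S x).support, S.ι (tofs S x j) * S.t ^ j :=
  S.coeff_ext _ _ (fun i => (S.coeff_sum (tofs S x) i).symm)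

lemma coeff_fsum (c : ℕ →₀ D) (i : ℕ) :
    S.coeff (c.sum fun j d => S.ι d * S.t ^ j) i = c i := S.coeff_sum c i

@[simp] lemma sp_coeff_zero (i : ℕ) : S.coeff 0 i = 0 := by
  have := S.coeff_sum 0 i
  simpa using this

lemma sp_coeff_add (x y : R) (i : ℕ) :
    S.coeff (x + y) i = S.coeff x i + S.coeff y i := by
  have key : x + y = ((tofs S x + tofs S y).sum fun j d => S.ι d * S.t ^ j) := by
    rw [Finsupp.sum_add_index' (by intro a; simp) (by intro a b₁ b₂; rw [map_add, add_mul])]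
    conv_lhs => rw [sp_repr S x, sp_repr S y]
    rfl
  rw [key, coeff_fsum]
  simp

/-- `coeff` at `i` as an additive monoid hom. -/
noncomputable def coeffHom (i : ℕ) : R →+ D :=
  AddMonoidHom.mk' (fun x => S.coeff x i) (fun x y => sp_coeff_add S x y i)

lemma sp_coeff_single (a : D) (j i : ℕ) :
    S.coeff (S.ι a * S.t ^ j) i = if i = j then a else 0 := by
  by_cases ha : a = 0
  · simp [ha]
  · have := S.coeff_sum (Finsupp.single j a) i
    rw [Finsupp.support_single_ne_zero _ ha, Finset.sum_singleton, Finsupp.single_eq_same] at this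
    rw [this, Finsupp.single_apply]
    simp [eq_comm]


lemma sp_eq_zero (x : R) (h : ∀ i, S.coeff x i = 0) : x = 0 :=
  S.coeff_ext x 0 (fun i => by rw [h i, sp_coeff_zero])

lemma sp_coeff_deg_ne_zero {x : R} (hx : x ≠ 0) : S.coeff x (S.deg x) ≠ 0 := by
  have hne : {i | S.coeff x i ≠ 0}.Nonempty := by
    by_contra hcon
    exact hx (sp_eq_zero S x (fun i => by
      by_contra hi
      exact hcon ⟨i, hi⟩))
  have hbdd : BddAbove {i | S.coeff x i ≠ 0} := (S.support_finite x).bddAbove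
  exact Nat.sSup_mem hne hbdd

lemma sp_le_deg {x : R} {i : ℕ} (h : S.coeff x i ≠ 0) : i ≤ S.deg x :=
  le_csSup (S.support_finite x).bddAbove h

lemma sp_coeff_eq_zero_of_deg_lt {x : R} {i : ℕ} (h : S.deg x < i) : S.coeff x i = 0 := by
  by_contra hc
  exact absurd (sp_le_deg S hc) (not_le.mpr h)

lemma sp_deg_le {x : R} {k : ℕ} (h : ∀ i, k < i → S.coeff x i = 0) : S.deg x ≤ k := by
  rcases Set.eq_empty_or_nonempty {i | S.coeff x i ≠ 0} with he | hne
  · simp [SkewPolyData.deg, he]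
  · exact csSup_le hne (fun i hi => by
      by_contra hik
      exact hi (h i (not_le.mp hik)))

@[simp] lemma sp_deg_zero : S.deg (0 : R) = 0 := by
  have : {i | S.coeff (0:R) i ≠ 0} = ∅ := by ext i; simp
  simp [SkewPolyData.deg, this]

lemma sp_deg_single_le (a : D) (j : ℕ) : S.deg (S.ι a * S.t ^ j) ≤ j := by
  apply sp_deg_le
  intro i hi
  rw [sp_coeff_single]
  simp [Nat.ne_of_gt hi]

lemma sp_tpow_mul (k : ℕ) (a : D) :
    S.t ^ k * S.ι a = S.ι ((⇑S.σ)^[k] a) * S.t ^ k := by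
  induction k generalizing a with
  | zero => simp
  | succ k ih =>
    rw [pow_succ, mul_assoc, S.twist, ← mul_assoc, ih, Function.iterate_succ_apply,
      mul_assoc]

lemma sp_mono_mul_mono (a b : D) (i j : ℕ) :
    (S.ι a * S.t ^ i) * (S.ι b * S.t ^ j) = S.ι (a * (⇑S.σ)^[i] b) * S.t ^ (i + j) := by
  rw [mul_assoc, ← mul_assoc (S.t ^ i), sp_tpow_mul, map_mul, mul_assoc, mul_assoc, ← pow_add]

lemma sp_coeff_mul (x y : R) (k : ℕ) :
    S.coeff (x * y) k = ∑ i ∈ (tofs S x).support, ∑ j ∈ (tofs S y).support,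
      (if k = i + j then S.coeff x i * (⇑S.σ)^[i] (S.coeff y j) else 0) := by
  have h1 : x * y = ∑ i ∈ (tofs S x).support, ∑ j ∈ (tofs S y).support,
      S.ι (S.coeff x i * (⇑S.σ)^[i] (S.coeff y j)) * S.t ^ (i + j) := by
    conv_lhs => rw [sp_repr S x, sp_repr S y]
    rw [Finset.sum_mul]
    refine Finset.sum_congr rfl fun i _ => ?_
    rw [Finset.mul_sum]
    refine Finset.sum_congr rfl fun j _ => ?_
    exact sp_mono_mul_mono S _ _ i j
  have h2 : ∀ (s : Finset ℕ) (g : ℕ → R), S.coeff (∑ i ∈ s, g i) k = ∑ i ∈ s, S.coeff (g i) k :=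
    fun s g => map_sum (coeffHom S k) g s
  rw [h1, h2]
  refine Finset.sum_congr rfl fun i _ => ?_
  rw [h2]
  refine Finset.sum_congr rfl fun j _ => ?_
  rw [sp_coeff_single]


lemma mem_tofs_support {x : R} {i : ℕ} : i ∈ (tofs S x).support ↔ S.coeff x i ≠ 0 :=
  Finsupp.mem_support_iff

lemma sp_iter_ne_zero {a : D} (ha : a ≠ 0) (k : ℕ) : (⇑S.σ)^[k] a ≠ 0 := by
  induction k with
  | zero => exact ha
  | succ k ih =>
    rw [Function.iterate_succ_apply']
    intro hc
    exact ih (by simpa using S.σ.injective (hc.trans (map_zero S.σ).symm))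

lemma sp_coeff_mul_high {x y : R} {k : ℕ} (hk : S.deg x + S.deg y < k) :
    S.coeff (x * y) k = 0 := by
  rw [sp_coeff_mul]
  refine Finset.sum_eq_zero fun i hi => Finset.sum_eq_zero fun j hj => ?_
  rw [if_neg]
  intro hc
  have h1 : i ≤ S.deg x := sp_le_deg S ((mem_tofs_support S).mp hi)
  have h2 : j ≤ S.deg y := sp_le_deg S ((mem_tofs_support S).mp hj)
  omega

lemma sp_coeff_mul_top (x y : R) :
    S.coeff (x * y) (S.deg x + S.deg y) =
      S.coeff x (S.deg x) * (⇑S.σ)^[S.deg x] (S.coeff y (S.deg y)) := by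
  by_cases hx : x = 0
  · simp [hx]
  by_cases hy : y = 0
  · simp [hy]
  rw [sp_coeff_mul]
  rw [Finset.sum_eq_single_of_mem (S.deg x)
    ((mem_tofs_support S).mpr (sp_coeff_deg_ne_zero S hx))]
  · rw [Finset.sum_eq_single_of_mem (S.deg y)
      ((mem_tofs_support S).mpr (sp_coeff_deg_ne_zero S hy))]
    · rw [if_pos rfl]
    · intro j hj hjne
      rw [if_neg]
      have h2 : j ≤ S.deg y := sp_le_deg S ((mem_tofs_support S).mp hj)
      omega
  · intro i hi hine
    refine Finset.sum_eq_zero fun j hj => ?_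
    rw [if_neg]
    have h1 : i ≤ S.deg x := sp_le_deg S ((mem_tofs_support S).mp hi)
    have h2 : j ≤ S.deg y := sp_le_deg S ((mem_tofs_support S).mp hj)
    omega

include S in
lemma sp_mul_ne_zero {x y : R} (hx : x ≠ 0) (hy : y ≠ 0) : x * y ≠ 0 := by
  intro hc
  have := sp_coeff_mul_top S x y
  rw [hc, sp_coeff_zero] at this
  exact (mul_ne_zero (sp_coeff_deg_ne_zero S hx)
    (sp_iter_ne_zero S (sp_coeff_deg_ne_zero S hy) _)) this.symm

lemma sp_deg_mul {x y : R} (hx : x ≠ 0) (hy : y ≠ 0) :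
    S.deg (x * y) = S.deg x + S.deg y := by
  refine le_antisymm (sp_deg_le S fun i hi => sp_coeff_mul_high S hi) (sp_le_deg S ?_)
  rw [sp_coeff_mul_top]
  exact mul_ne_zero (sp_coeff_deg_ne_zero S hx)
    (sp_iter_ne_zero S (sp_coeff_deg_ne_zero S hy) _)

lemma sp_eq_const {x : R} (h : S.deg x = 0) : x = S.ι (S.coeff x 0) := by
  refine S.coeff_ext _ _ fun i => ?_
  have : S.ι (S.coeff x 0) = S.ι (S.coeff x 0) * S.t ^ 0 := by rw [pow_zero, mul_one]
  rw [this, sp_coeff_single]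
  rcases Nat.eq_zero_or_pos i with h0 | h0
  · simp [h0]
  · rw [if_neg (Nat.pos_iff_ne_zero.mp h0), sp_coeff_eq_zero_of_deg_lt S (h ▸ h0)]

lemma sp_deg_span_le {f x : R} (hf : f ≠ 0) (hx : x ∈ Submodule.span R {f}) (hx0 : x ≠ 0) :
    S.deg f ≤ S.deg x := by
  obtain ⟨q, hq⟩ := Submodule.mem_span_singleton.mp hx
  rw [smul_eq_mul] at hq
  have hq0 : q ≠ 0 := by rintro rfl; rw [zero_mul] at hq; exact hx0 hq.symm
  rw [← hq, sp_deg_mul S hq0 hf]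
  omega

lemma principal_gen (modr : R → R → R) (hmodr : S.IsModR modr)
    (K : Submodule R R) (h1 : (1:R) ∉ K) {x₀ : R} (hx₀ : x₀ ∈ K) (hx0 : x₀ ≠ 0) :
    ∃ g, g ∈ K ∧ g ≠ 0 ∧ 1 ≤ S.deg g ∧ ∀ x ∈ K, ∃ q, x = q * g := by
  classical
  have hex : ∃ n, ∃ x, x ∈ K ∧ x ≠ 0 ∧ S.deg x = n := ⟨S.deg x₀, x₀, hx₀, hx0, rfl⟩
  obtain ⟨g, hgK, hg0, hgdeg⟩ := Nat.find_spec hex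
  have hmin : ∀ x, x ∈ K → x ≠ 0 → Nat.find hex ≤ S.deg x := by
    intro x hxK hx0'
    by_contra hc
    exact Nat.find_min hex (not_le.mp hc) ⟨x, hxK, hx0', rfl⟩
  have hdg1 : 1 ≤ S.deg g := by
    by_contra hc
    have h0 : S.deg g = 0 := by omega
    set c := S.coeff g 0 with hcdef
    have hgc : g = S.ι c := sp_eq_const S h0
    have hc0 : c ≠ 0 := by
      have := sp_coeff_deg_ne_zero S hg0
      rwa [h0] at this
    have hone : (1:R) = S.ι c⁻¹ • g := by
      rw [smul_eq_mul, hgc, ← map_mul, inv_mul_cancel₀ hc0, map_one]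
    exact h1 (hone ▸ K.smul_mem _ hgK)
  refine ⟨g, hgK, hg0, hdg1, fun x hxK => ?_⟩
  obtain ⟨⟨q, hq⟩, hrem⟩ := hmodr x g hdg1
  have hrK : modr x g ∈ K := by
    have hxr : modr x g = x - q * g := eq_sub_of_add_eq' hq.symm
    rw [hxr]
    exact K.sub_mem hxK (by simpa [smul_eq_mul] using K.smul_mem q hgK)
  by_cases hr0 : modr x g = 0
  · exact ⟨q, by rw [hq, hr0, add_zero]⟩
  · exfalso
    have hlt : S.deg (modr x g) < S.deg g := by
      rcases hrem with h0 | hh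
      · exact absurd h0 hr0
      · exact hh
    have := hmin (modr x g) hrK hr0
    omega

lemma span_f_maximal (modr : R → R → R) (hmodr : S.IsModR modr)
    (f : R) (m : ℕ) (hm : 1 < m) (hdegf : S.deg f = m) (hirr : S.Irred f)
    (K : Submodule R R) (hK : Submodule.span R {f} ≤ K) :
    K = ⊤ ∨ K = Submodule.span R {f} := by
  have hf0 : f ≠ 0 := fun hc => by rw [hc, sp_deg_zero] at hdegf; omega
  by_cases h1 : (1:R) ∈ K
  · left
    rw [Submodule.eq_top_iff']
    intro x
    simpa using K.smul_mem x h1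
  right
  have hfK : f ∈ K := hK (Submodule.mem_span_singleton_self f)
  obtain ⟨g, hgK, hg0, hdg1, hgen⟩ := principal_gen S modr hmodr K h1 hfK hf0
  obtain ⟨q, hq⟩ := hgen f hfK
  have hq0 : q ≠ 0 := fun hc => hf0 (by rw [hq, hc, zero_mul])
  have hdegs : S.deg q + S.deg g = m := by rw [← hdegf, hq, sp_deg_mul S hq0 hg0]
  have hdgm : S.deg g = m := by
    by_contra hc
    exact hirr.2 ⟨q, g, by omega, by omega, hdg1, by omega, hq⟩
  have hdq0 : S.deg q = 0 := by omega
  set c := S.coeff q 0 with hcdef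
  have hqc : q = S.ι c := sp_eq_const S hdq0
  have hc0 : c ≠ 0 := by
    have := sp_coeff_deg_ne_zero S hq0
    rwa [hdq0] at this
  have hgspan : g ∈ Submodule.span R {f} := by
    refine Submodule.mem_span_singleton.mpr ⟨S.ι c⁻¹, ?_⟩
    rw [smul_eq_mul, hq, hqc, ← mul_assoc, ← map_mul, inv_mul_cancel₀ hc0, map_one, one_mul]
  refine le_antisymm (fun x hxK => ?_) hK
  obtain ⟨q', hq'⟩ := hgen x hxK
  rw [hq']
  simpa [smul_eq_mul] using Submodule.smul_mem _ q' hgspan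

lemma sp_coeff_finsum {α : Type*} (s : Finset α) (gg : α → R) (k : ℕ) :
    S.coeff (∑ i ∈ s, gg i) k = ∑ i ∈ s, S.coeff (gg i) k :=
  map_sum (coeffHom S k) gg s

lemma quot_equiv_exists (modr : R → R → R) (hmodr : S.IsModR modr)
    (g : R) (hg0 : g ≠ 0) (hgd : 1 ≤ S.deg g) :
    ∃ φ : (Fin (S.deg g) → D) ≃+ (R ⧸ Submodule.span R {g}),
      ∀ (d : D) (c : Fin (S.deg g) → D),
        φ (fun i => d * c i) = S.ι d • φ c := by
  classical
  set k := S.deg g with hk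
  have hcoeff : ∀ (c : Fin k → D) (j : ℕ),
      S.coeff (∑ i : Fin k, S.ι (c i) * S.t ^ (i : ℕ)) j =
        if h : j < k then c ⟨j, h⟩ else 0 := by
    intro c j
    rw [sp_coeff_finsum]
    have hterm : ∀ i : Fin k, S.coeff (S.ι (c i) * S.t ^ (i:ℕ)) j =
        if j = (i:ℕ) then c i else 0 := fun i => sp_coeff_single S (c i) i j
    rw [Finset.sum_congr rfl (fun i _ => hterm i)]
    by_cases h : j < k
    · rw [dif_pos h, Finset.sum_eq_single_of_mem ⟨j, h⟩ (Finset.mem_univ _)]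
      · simp
      · intro b _ hb
        rw [if_neg]
        intro hcon
        exact hb (Fin.ext hcon.symm)
    · rw [dif_neg h]
      refine Finset.sum_eq_zero fun i _ => ?_
      rw [if_neg]
      have := i.isLt
      omega
  have hzero : ∀ c : Fin k → D,
      (∑ i : Fin k, S.ι (c i) * S.t ^ (i : ℕ)) ∈ Submodule.span R {g} →
      (∑ i : Fin k, S.ι (c i) * S.t ^ (i : ℕ)) = 0 := by
    intro c hmem
    by_contra hne
    have h1 := sp_deg_span_le S hg0 hmem hne
    have h2 : S.deg (∑ i : Fin k, S.ι (c i) * S.t ^ (i : ℕ)) ≤ k - 1 := by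
      apply sp_deg_le
      intro i hi
      rw [hcoeff, dif_neg (by omega)]
    omega
  set φ₀ : (Fin k → D) →+ (R ⧸ Submodule.span R {g}) :=
    AddMonoidHom.mk' (fun c => Submodule.Quotient.mk (∑ i : Fin k, S.ι (c i) * S.t ^ (i : ℕ)))
      (by
        intro c₁ c₂
        show Submodule.Quotient.mk (∑ i : Fin k, S.ι ((c₁ + c₂) i) * S.t ^ (i:ℕ)) = _
        rw [← Submodule.Quotient.mk_add]
        have hsum : (∑ i : Fin k, S.ι ((c₁ + c₂) i) * S.t ^ (i:ℕ)) =
            (∑ i : Fin k, S.ι (c₁ i) * S.t ^ (i:ℕ)) + ∑ i : Fin k, S.ι (c₂ i) * S.t ^ (i:ℕ) := by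
          rw [← Finset.sum_add_distrib]
          refine Finset.sum_congr rfl fun i _ => ?_
          rw [show (c₁ + c₂) i = c₁ i + c₂ i from rfl, map_add, add_mul]
        rw [hsum]) with hφ₀
  have hinj : Function.Injective φ₀ := by
    rw [injective_iff_map_eq_zero]
    intro c hc
    have hmem : (∑ i : Fin k, S.ι (c i) * S.t ^ (i : ℕ)) ∈ Submodule.span R {g} :=
      (Submodule.Quotient.mk_eq_zero _).mp hc
    have hz := hzero c hmem
    funext i
    have := hcoeff c (i : ℕ)
    rw [hz, sp_coeff_zero, dif_pos i.isLt] at this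
    simpa using this.symm
  have hsurj : Function.Surjective φ₀ := by
    intro y
    obtain ⟨x, rfl⟩ := Submodule.Quotient.mk_surjective _ y
    obtain ⟨⟨q, hq⟩, hrem⟩ := hmodr x g hgd
    set r := modr x g with hr
    refine ⟨fun i => S.coeff r (i : ℕ), ?_⟩
    have hzr : (∑ i : Fin k, S.ι (S.coeff r (i:ℕ)) * S.t ^ (i : ℕ)) = r := by
      refine S.coeff_ext _ _ fun j => ?_
      rw [hcoeff]
      by_cases h : j < k
      · rw [dif_pos h]
      · rw [dif_neg h]
        rcases hrem with h0 | hlt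
        · rw [h0, sp_coeff_zero]
        · exact (sp_coeff_eq_zero_of_deg_lt S (by omega)).symm
    show Submodule.Quotient.mk _ = Submodule.Quotient.mk x
    rw [hzr]
    rw [Submodule.Quotient.eq]
    refine Submodule.mem_span_singleton.mpr ⟨-q, ?_⟩
    rw [smul_eq_mul, hq, neg_mul]
    abel
  refine ⟨AddEquiv.ofBijective φ₀ ⟨hinj, hsurj⟩, fun d c => ?_⟩
  show Submodule.Quotient.mk _ = S.ι d • Submodule.Quotient.mk _
  rw [← Submodule.Quotient.mk_smul, smul_eq_mul, Finset.mul_sum]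
  congr 1
  refine Finset.sum_congr rfl fun i _ => ?_
  rw [← mul_assoc, ← map_mul]

lemma deg_eq_of_equiv (modr : R → R → R) (hmodr : S.IsModR modr)
    {g₁ g₂ : R} (h10 : g₁ ≠ 0) (h1d : 1 ≤ S.deg g₁) (h20 : g₂ ≠ 0) (h2d : 1 ≤ S.deg g₂)
    (e : (R ⧸ Submodule.span R {g₁}) ≃ₗ[R] (R ⧸ Submodule.span R {g₂})) :
    S.deg g₁ = S.deg g₂ := by
  obtain ⟨φ₁, hφ₁⟩ := quot_equiv_exists S modr hmodr g₁ h10 h1d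
  obtain ⟨φ₂, hφ₂⟩ := quot_equiv_exists S modr hmodr g₂ h20 h2d
  let ψ : (Fin (S.deg g₁) → D) ≃+ (Fin (S.deg g₂) → D) :=
    (φ₁.trans e.toAddEquiv).trans φ₂.symm
  have hψ : ∀ (d : D) (c : Fin (S.deg g₁) → D), ψ (d • c) = d • ψ c := by
    intro d c
    show φ₂.symm (e (φ₁ (d • c))) = d • φ₂.symm (e (φ₁ c))
    have h1 : φ₁ (d • c) = S.ι d • φ₁ c := hφ₁ d c
    rw [h1, map_smul]
    apply φ₂.injective
    rw [AddEquiv.apply_symm_apply]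
    have h2 := hφ₂ d (φ₂.symm (e (φ₁ c)))
    rw [AddEquiv.apply_symm_apply] at h2
    exact h2.symm
  have := (ψ.toLinearEquiv hψ).finrank_eq
  simpa [Module.finrank_pi] using this

lemma core_lemma (modr : R → R → R) (hmodr : S.IsModR modr)
    (f : R) (m : ℕ) (hm : 1 < m) (hdegf : S.deg f = m) (hirr : S.Irred f)
    {c' : R} (hc' : c' ∉ Submodule.span R {f})
    {a : R} (ha0 : a ≠ 0) (hadeg : S.deg a ≤ m)
    (hmem : a * c' ∈ Submodule.span R {f}) :
    S.deg a = m ∧ Sim a f := by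
  classical
  have hf0 : f ≠ 0 := fun hc => by rw [hc, sp_deg_zero] at hdegf; omega
  set ψ : R →ₗ[R] (R ⧸ Submodule.span R {f}) :=
    (Submodule.span R {f}).mkQ ∘ₗ LinearMap.toSpanSingleton R R c' with hψdef
  have hψx : ∀ x : R, ψ x = Submodule.Quotient.mk (x * c') := fun x => rfl
  have hker : ∀ x : R, x ∈ LinearMap.ker ψ ↔ x * c' ∈ Submodule.span R {f} := by
    intro x
    rw [LinearMap.mem_ker, hψx, Submodule.Quotient.mk_eq_zero]
  have h1K : (1:R) ∉ LinearMap.ker ψ := by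
    rw [hker, one_mul]
    exact hc'
  have haK : a ∈ LinearMap.ker ψ := (hker a).mpr hmem
  obtain ⟨g, hgK, hg0, hgd, hgen⟩ := principal_gen S modr hmodr (LinearMap.ker ψ) h1K haK ha0
  have hkerspan : LinearMap.ker ψ = Submodule.span R {g} := by
    apply le_antisymm
    · intro x hx
      obtain ⟨q, hq⟩ := hgen x hx
      exact Submodule.mem_span_singleton.mpr ⟨q, by rw [smul_eq_mul]; exact hq.symm⟩
    · rw [Submodule.span_le, Set.singleton_subset_iff]
      exact hgK
  have hsurj : Function.Surjective ψ := by
    have hrange : LinearMap.range ψ = ⊤ := by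
      set I := Submodule.comap (Submodule.span R {f}).mkQ (LinearMap.range ψ) with hI
      have hle : Submodule.span R {f} ≤ I := by
        intro y hy
        rw [hI, Submodule.mem_comap, Submodule.mkQ_apply,
          (Submodule.Quotient.mk_eq_zero _).mpr hy]
        exact Submodule.zero_mem _
      rcases span_f_maximal S modr hmodr f m hm hdegf hirr I hle with htop | heq
      · rw [eq_top_iff]
        intro y _
        obtain ⟨x, rfl⟩ := Submodule.Quotient.mk_surjective _ y
        have hxI : x ∈ I := htop ▸ Submodule.mem_top
        exact hxI
      · exfalso
        apply hc'
        have hcI : c' ∈ I := by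
          rw [hI, Submodule.mem_comap]
          exact ⟨1, by rw [hψx 1, one_mul]; rfl⟩
        rwa [heq] at hcI
    exact LinearMap.range_eq_top.mp hrange
  have e : (R ⧸ Submodule.span R {g}) ≃ₗ[R] (R ⧸ Submodule.span R {f}) :=
    (Submodule.quotEquivOfEq _ _ hkerspan.symm).trans (ψ.quotKerEquivOfSurjective hsurj)
  have hdegg : S.deg g = m := by
    have := deg_eq_of_equiv S modr hmodr hg0 hgd hf0 (by omega) e
    omega
  obtain ⟨q, hq⟩ := hgen a haK
  have hq0 : q ≠ 0 := fun hc => ha0 (by rw [hq, hc, zero_mul])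
  have hdm : S.deg a = S.deg q + S.deg g := by rw [hq]; exact sp_deg_mul S hq0 hg0
  have hdam : S.deg a = m := by omega
  have hdq : S.deg q = 0 := by omega
  refine ⟨hdam, ?_⟩
  have hspaneq : Submodule.span R {a} = Submodule.span R {g} := by
    apply le_antisymm
    · rw [Submodule.span_le, Set.singleton_subset_iff]
      exact Submodule.mem_span_singleton.mpr ⟨q, by rw [smul_eq_mul]; exact hq.symm⟩
    · rw [Submodule.span_le, Set.singleton_subset_iff]
      set c := S.coeff q 0 with hcdef
      have hqc : q = S.ι c := sp_eq_const S hdq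
      have hc0 : c ≠ 0 := by
        have := sp_coeff_deg_ne_zero S hq0
        rwa [hdq] at this
      refine Submodule.mem_span_singleton.mpr ⟨S.ι c⁻¹, ?_⟩
      rw [smul_eq_mul, hq, hqc, ← mul_assoc, ← map_mul, inv_mul_cancel₀ hc0, map_one, one_mul]
  exact ⟨(Submodule.quotEquivOfEq _ _ hspaneq).trans e⟩

end Helpers

/-- Let `f ∈ R = D[t;σ]` be monic irreducible of degree `m > 1` with
`gcrd(f,t) = 1`, let `ν ∈ D`, `ρ ∈ Aut(D)`, `F' = Fix(ρ) ∩ F` with `F/F'`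
finite-dimensional, and let `(R_m,∘)` be the `F'`-algebra of skew polynomials of degree
`< m` with multiplication `b∘c = (b + νρ(b₀)t^m)·c mod_r f`. Then:
(i) if `a ∈ A` is reducible, then `a` is not a left zero divisor of `(R_m,∘)`;
(ii) if `ν = 0`, then `(R_m,∘)` is a division algebra over `F'`;
(iii) if `A` contains no polynomial similar to `f`, then `(R_m,∘)` is a division algebra
over `F'`. -/
theorem division_algebra_from_nu_rho_f
    {D Rg : Type*} [DivisionRing D] [Ring Rg] (S : SkewPolyData D Rg)
    (n : ℕ) (u : D) (hord : S.OrderModInner n u)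
    {F : Type*} [Field F] (ιF : F →+* D)
    (hFrange : ∀ a : D, a ∈ S.Fset ↔ ∃ c : F, ιF c = a)
    (modr : Rg → Rg → Rg) (hmodr : S.IsModR modr)
    (f : Rg) (m : ℕ) (hm : 1 < m) (hdegf : S.deg f = m) (hmonic : S.Monic f)
    (hirr : S.Irred f) (hcop : S.CoprimeT f)
    (h : Rg) (hh : Polynomial F) (hmclm : S.IsMclm n u ιF f h hh)
    (ν : D) (ρ : D ≃+* D)
    (hfin : FinDimOver {a : D | a ∈ S.Fset ∧ ρ a = a} S.Fset) :
    (∀ b : Rg, S.deg b < m →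
      S.Reducible (b + S.ι (ν * ρ (S.const b)) * S.t ^ m) →
      ∀ c : Rg, S.deg c < m → c ≠ 0 → S.circ modr f ν ρ m b c ≠ 0) ∧
    (ν = 0 → ∀ b c : Rg, S.deg b < m → S.deg c < m → b ≠ 0 → c ≠ 0 →
      S.circ modr f ν ρ m b c ≠ 0) ∧
    ((∀ x ∈ S.ASet ν ρ m, ¬ Sim x f) →
      ∀ b c : Rg, S.deg b < m → S.deg c < m → b ≠ 0 → c ≠ 0 →
      S.circ modr f ν ρ m b c ≠ 0) := by
  classical
  have hf0 : f ≠ 0 := fun hc => by rw [hc, sp_deg_zero] at hdegf; omega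
  have hcircmem : ∀ b c : Rg, S.circ modr f ν ρ m b c = 0 →
      (b + S.ι (ν * ρ (S.const b)) * S.t ^ m) * c ∈ Submodule.span Rg {f} := by
    intro b c h0
    obtain ⟨⟨q, hq⟩, _⟩ :=
      hmodr ((b + S.ι (ν * ρ (S.const b)) * S.t ^ m) * c) f (by omega)
    rw [SkewPolyData.circ] at h0
    rw [h0, add_zero] at hq
    exact Submodule.mem_span_singleton.mpr ⟨q, by rw [smul_eq_mul]; exact hq.symm⟩
  have hcnotin : ∀ c : Rg, S.deg c < m → c ≠ 0 → c ∉ Submodule.span Rg {f} := by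
    intro c hc hc0 hmem
    have := sp_deg_span_le S hf0 hmem hc0
    omega
  have hadegle : ∀ b : Rg, S.deg b < m →
      S.deg (b + S.ι (ν * ρ (S.const b)) * S.t ^ m) ≤ m := by
    intro b hb
    apply sp_deg_le
    intro i hi
    rw [sp_coeff_add, sp_coeff_single, if_neg (by omega),
      sp_coeff_eq_zero_of_deg_lt S (by omega), add_zero]
  refine ⟨?_, ?_, ?_⟩
  · -- part (i)
    intro b hb hred c hc hc0 hcon
    have hmem := hcircmem b c hcon
    have hadeg := hadegle b hb
    obtain ⟨g, p, hg1, hgd, hp1, hpd, hfact⟩ := hred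
    have hg0 : g ≠ 0 := fun hc' => by rw [hc', sp_deg_zero] at hg1; omega
    have hp0 : p ≠ 0 := fun hc' => by rw [hc', sp_deg_zero] at hp1; omega
    by_cases hpc : p * c ∈ Submodule.span Rg {f}
    · have := (core_lemma S modr hmodr f m hm hdegf hirr
        (hcnotin c hc hc0) hp0 (by omega) hpc).1
      omega
    · have hmem' : g * (p * c) ∈ Submodule.span Rg {f} := by
        rw [← mul_assoc, ← hfact]
        exact hmem
      have := (core_lemma S modr hmodr f m hm hdegf hirr
        hpc hg0 (by omega) hmem').1
      omega
  · -- part (ii)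
    rintro rfl b c hb hc hb0 hc0 hcon
    have hmem := hcircmem b c hcon
    rw [zero_mul, map_zero, zero_mul, add_zero] at hmem
    have := (core_lemma S modr hmodr f m hm hdegf hirr
      (hcnotin c hc hc0) hb0 (by omega) hmem).1
    omega
  · -- part (iii)
    intro hnsim b c hb hc hb0 hc0 hcon
    have hmem := hcircmem b c hcon
    have hadeg := hadegle b hb
    have ha0 : b + S.ι (ν * ρ (S.const b)) * S.t ^ m ≠ 0 := by
      intro hc'
      apply sp_coeff_deg_ne_zero S hb0
      have hco : S.coeff (b + S.ι (ν * ρ (S.const b)) * S.t ^ m) (S.deg b) =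
          S.coeff b (S.deg b) := by
        rw [sp_coeff_add, sp_coeff_single, if_neg (by omega), add_zero]
      rw [← hco, hc', sp_coeff_zero]
    have hsim := (core_lemma S modr hmodr f m hm hdegf hirr
      (hcnotin c hc hc0) ha0 hadeg hmem).2
    exact hnsim _ ⟨b, hb, rfl⟩ hsim
end
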